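/- Let F be a finite field of characteristic 2 with |F| = 2^m, m ≥ 1. Then there exist k = 2^{m−1} − 1 pairs (a_1, b_1), ..., (a_k, b_k) of nonzero elements of F such that: (i) the a_j are pairwise distinct; (ii) the b_j are pairwise distinct; (iii) a_s a_t ≠ b_s for all s, t; (iv) b_s/a_s ≠ b_t/a_t for s ≠ t; (v) b_s + b_t ≠ a_u(a_s + a_t) for all s ≠ t and all u; (vi) (a_t + a_u)·b_s ≠ a_s(b_t + b_u) + a_u b_t + a_t b_u for all pairwise distinct s, t, u. -/
import Mathlib

theorem distance4_construction_exists {F : Type*} [Field F] [Fintype F] [CharP F 2]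
    (m : ℕ) (hm : 1 ≤ m) (hcard : Fintype.card F = 2 ^ m) :
    ∃ a b : Fin (2 ^ (m - 1) - 1) → F,
      (∀ j, a j ≠ 0) ∧ (∀ j, b j ≠ 0) ∧
      Function.Injective a ∧
      Function.Injective b ∧
      (∀ s t, a s * a t ≠ b s) ∧
      (∀ s t, s ≠ t → b s / a s ≠ b t / a t) ∧
      (∀ s t u, s ≠ t → b s + b t ≠ a u * (a s + a t)) ∧
      (∀ s t u, s ≠ t → s ≠ u → t ≠ u →
        (a t + a u) * b s ≠ a s * (b t + b u) + a u * b t + a t * b u) := by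
  classical
  haveI : Fact (Nat.Prime 2) := ⟨Nat.prime_two⟩
  letI : Algebra (ZMod 2) F := ZMod.algebra F 2
  have htwo : (2 : F) = 0 := by exact_mod_cast CharP.cast_eq_zero F 2
  have hadd : ∀ x y : F, x + y = 0 → x = y := fun x y hxy => by
    linear_combination hxy - y * htwo
  haveI : Module.Finite (ZMod 2) F := Module.Finite.of_finite
  have hrank : Module.finrank (ZMod 2) F = m := by
    have h1 : Fintype.card F = Fintype.card (ZMod 2) ^ Module.finrank (ZMod 2) F :=
      Module.card_eq_pow_finrank
    rw [ZMod.card, hcard] at h1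
    exact (Nat.pow_right_injective le_rfl h1.symm)
  have hm1 : 0 < Module.finrank (ZMod 2) F := by rw [hrank]; omega
  set B := Module.finBasis (ZMod 2) F with hB
  set i : Fin (Module.finrank (ZMod 2) F) := ⟨0, hm1⟩ with hi
  set φ : F →ₗ[ZMod 2] ZMod 2 := B.coord i with hφ
  set c : F := B i with hc
  have hφc : φ c = 1 := by
    simp [hφ, hc, Module.Basis.coord_apply, Module.Basis.repr_self]
  have hsurj : Function.Surjective φ := by
    intro x
    have hy : x = 0 ∨ x = 1 := by
      have h1 : ((x.val : ℕ) : ZMod 2) = x := ZMod.natCast_rightInverse x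
      have h2 : x.val < 2 := ZMod.val_lt x
      have h3 : x.val = 0 ∨ x.val = 1 := by omega
      rcases h3 with h3 | h3 <;> [left; right] <;> rw [← h1, h3] <;> simp
    rcases hy with h | h
    · exact ⟨0, by simp [h]⟩
    · exact ⟨c, by rw [hφc, h]⟩
  have hker : Module.finrank (ZMod 2) (LinearMap.ker φ) = m - 1 := by
    have h := LinearMap.finrank_range_add_finrank_ker φ
    rw [LinearMap.range_eq_top.mpr hsurj, finrank_top, Module.finrank_self, hrank] at h
    omega
  have hcardker : Fintype.card (LinearMap.ker φ) = 2 ^ (m - 1) := by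
    have h := Module.card_eq_pow_finrank (K := ZMod 2) (V := LinearMap.ker φ)
    rw [ZMod.card, hker] at h
    exact h
  set S : Finset F := (Finset.univ.filter fun x => φ x = 0).erase 0 with hSdef
  have hmem0 : (0 : F) ∈ Finset.univ.filter fun x => φ x = 0 := by
    simp
  have hScard : S.card = 2 ^ (m - 1) - 1 := by
    rw [hSdef, Finset.card_erase_of_mem hmem0]
    congr 1
    rw [← Fintype.card_subtype]
    rw [← hcardker]
    exact Fintype.card_congr (Equiv.subtypeEquivRight fun x => (LinearMap.mem_ker).symm)
  set e : Fin (2 ^ (m - 1) - 1) ≃ S := (S.equivFinOfCardEq hScard).symm with he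
  set a : Fin (2 ^ (m - 1) - 1) → F := fun j => ((e j : F)) with ha
  set b : Fin (2 ^ (m - 1) - 1) → F := fun j => a j * (a j + c) with hb
  have haS : ∀ j, a j ∈ S := fun j => (e j).2
  have ha0 : ∀ j, a j ≠ 0 := by
    intro j
    have := haS j
    rw [hSdef, Finset.mem_erase] at this
    exact this.1
  have hamem : ∀ j, φ (a j) = 0 := by
    intro j
    have := haS j
    rw [hSdef, Finset.mem_erase, Finset.mem_filter] at this
    exact this.2.2
  have hainj : Function.Injective a := by
    intro s t h
    exact e.injective (Subtype.ext h)
  have hφne : ∀ x : F, φ x = 0 → x + c ≠ 0 := by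
    intro x hx h
    have h2 := congrArg φ h
    rw [map_add, hx, hφc, map_zero, zero_add] at h2
    exact one_ne_zero h2
  have hb0 : ∀ j, b j ≠ 0 := fun j => mul_ne_zero (ha0 j) (hφne _ (hamem j))
  refine ⟨a, b, ha0, hb0, hainj, ?_, ?_, ?_, ?_, ?_⟩
  · -- Injective b
    intro s t h
    by_contra hst
    have key : (a s + a t) * (a s + a t + c) = 0 := by
      rw [hb] at h
      linear_combination h + (a t * c + a t ^ 2 + a s * a t) * htwo
    rcases mul_eq_zero.mp key with h1 | h1
    · exact hst (hainj (hadd _ _ h1))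
    · exact hφne (a s + a t) (by rw [map_add, hamem, hamem, add_zero]) h1
  · -- a s * a t ≠ b s
    intro s t h
    rw [hb] at h
    have h' : a t = a s + c := mul_left_cancel₀ (ha0 s) h
    have h2 := congrArg φ h'
    rw [map_add, hamem, hamem, hφc, zero_add] at h2
    exact one_ne_zero h2.symm
  · -- b s / a s ≠ b t / a t
    intro s t hst h
    rw [hb] at h
    simp only [mul_div_cancel_left₀ _ (ha0 s), mul_div_cancel_left₀ _ (ha0 t)] at h
    exact hst (hainj (add_right_cancel h))
  · -- (v)
    intro s t u hst h
    rw [hb] at h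
    have key : (a s + a t) * (a s + a t + c + a u) = 0 := by
      linear_combination h + (a t * a u + a s * a u + a s * a t) * htwo
    rcases mul_eq_zero.mp key with h1 | h1
    · exact hst (hainj (hadd _ _ h1))
    · have h2 := congrArg φ h1
      simp only [map_add, map_zero, hamem, hφc, add_zero, zero_add] at h2
      exact one_ne_zero h2
  · -- (vi)
    intro s t u hst hsu htu h
    rw [hb] at h
    have key : (a t + a u) * ((a s + a t) * (a s + a u)) = 0 := by
      linear_combination h + (a t * a u * c + a t * a u ^ 2 + a t ^ 2 * a u
        + a s * a u ^ 2 + a s * a t * a u + a s * a t ^ 2) * htwo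
    rcases mul_eq_zero.mp key with h1 | h1
    · exact htu (hainj (hadd _ _ h1))
    · rcases mul_eq_zero.mp h1 with h2 | h2
      · exact hst (hainj (hadd _ _ h2))
      · exact hsu (hainj (hadd _ _ h2))
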